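/- Let θ ∈ {0,1/2}, and let ε be a complex number satisfying either Re ε > 0 and ε⁻¹ ∉ ℤ, or Re ε = 0 and Im ε > 0. Define for m,n ∈ ℤ and r,s ∈ ℤ+θ: f(m,n) = −n(1+εn)/(1+ε(m+n)), g(m,r) = −(m/2+r)(1+2εr)/(1+2ε(m+r)), h(r,m) = −m(1+εm)/(1+2ε(m+r)), d(r,s) = (1+2εs)/(1+ε(r+s)), φ(m,n) = (1/24)(m³−m+(ε−ε⁻¹)m²)·δ_{m+n,0}, σ(r,s) = (1/24)(4r²−1+2(ε−ε⁻¹)r)·δ_{r+s,0}, and ψ(m,r) = ρ(r,m) = 0. Then for all m,n,l ∈ ℤ and r,s,t ∈ ℤ+θ: φ(m,n) − φ(n,m) = (1/12)(m³−m)δ_{m+n,0}; σ(r,s) + σ(s,r) = (1/12)(4r²−1)δ_{r+s,0}; ψ(m,r) = ρ(r,m); (m−n)φ(m+n,l) = f(n,l)φ(m,n+l) − f(m,l)φ(n,m+l); (m−n)ψ(m+n,r) = g(n,r)ψ(m,n+r) − g(m,r)ψ(n,m+r); (m/2−r)ρ(m+r,n) = h(r,n)ψ(m,n+r) − f(m,n)ρ(r,m+n);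 (m/2−r)σ(m+r,s) = d(r,s)φ(m,r+s) − g(m,s)σ(r,m+s); 2φ(r+s,m) = h(s,m)σ(r,m+s) + h(r,m)σ(s,m+r); 2ψ(r+s,t) = d(s,t)ρ(r,s+t) + d(r,t)ρ(s,r+t). -/
import Mathlib
set_option maxHeartbeats 1600000


/-- membership in ℤ + θ -/
def InZT (θ x : ℂ) : Prop := ∃ k : ℤ, x = (k : ℂ) + θ

/-- f(m,n) = −n(1+εn)/(1+ε(m+n)) -/
noncomputable def vf (ε m n : ℂ) : ℂ := -n * (1 + ε * n) / (1 + ε * (m + n))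

/-- g(m,r) = −(m/2+r)(1+2εr)/(1+2ε(m+r)) -/
noncomputable def vg (ε m r : ℂ) : ℂ :=
  -(m / 2 + r) * (1 + 2 * ε * r) / (1 + 2 * ε * (m + r))

/-- h(r,m) = −m(1+εm)/(1+2ε(m+r)) -/
noncomputable def vh (ε r m : ℂ) : ℂ := -m * (1 + ε * m) / (1 + 2 * ε * (m + r))

/-- d(r,s) = (1+2εs)/(1+ε(r+s)) -/
noncomputable def vd (ε r s : ℂ) : ℂ := (1 + 2 * ε * s) / (1 + ε * (r + s))

/-- φ(m,n) = (1/24)(m³−m+(ε−ε⁻¹)m²)δ_{m+n,0} -/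
noncomputable def vphi (ε m n : ℂ) : ℂ :=
  (1 / 24) * (m ^ 3 - m + (ε - ε⁻¹) * m ^ 2) * (if m + n = 0 then 1 else 0)

/-- σ(r,s) = (1/24)(4r²−1+2(ε−ε⁻¹)r)δ_{r+s,0} -/
noncomputable def vsig (ε r s : ℂ) : ℂ :=
  (1 / 24) * (4 * r ^ 2 - 1 + 2 * (ε - ε⁻¹) * r) * (if r + s = 0 then 1 else 0)

lemma vphi_pos (ε a b : ℂ) (h : a + b = 0) :
    vphi ε a b = (1 / 24) * (a ^ 3 - a + (ε - ε⁻¹) * a ^ 2) := by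
  rw [vphi, if_pos h, mul_one]

lemma vphi_zero (ε a b : ℂ) (h : ¬ a + b = 0) : vphi ε a b = 0 := by
  rw [vphi, if_neg h, mul_zero]

lemma vsig_pos (ε a b : ℂ) (h : a + b = 0) :
    vsig ε a b = (1 / 24) * (4 * a ^ 2 - 1 + 2 * (ε - ε⁻¹) * a) := by
  rw [vsig, if_pos h, mul_one]

lemma vsig_zero (ε a b : ℂ) (h : ¬ a + b = 0) : vsig ε a b = 0 := by
  rw [vsig, if_neg h, mul_zero]


lemma aux1 (ε M N : ℂ) (hε0 : ε ≠ 0)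
    (d1 : (1 : ℂ) + ε * (N + -(M + N)) ≠ 0)
    (d2 : (1 : ℂ) + ε * (M + -(M + N)) ≠ 0) :
    (M - N) * (1 / 24 * ((M + N) ^ 3 - (M + N) + (ε - ε⁻¹) * (M + N) ^ 2))
      = -(-(M + N)) * (1 + ε * -(M + N)) / (1 + ε * (N + -(M + N)))
          * (1 / 24 * (M ^ 3 - M + (ε - ε⁻¹) * M ^ 2))
        - -(-(M + N)) * (1 + ε * -(M + N)) / (1 + ε * (M + -(M + N)))
          * (1 / 24 * (N ^ 3 - N + (ε - ε⁻¹) * N ^ 2)) := by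
  rw [div_mul_eq_mul_div (-(-(M + N)) * (1 + ε * -(M + N))) (1 + ε * (N + -(M + N)))
        (1 / 24 * (M ^ 3 - M + (ε - ε⁻¹) * M ^ 2)),
      div_mul_eq_mul_div (-(-(M + N)) * (1 + ε * -(M + N))) (1 + ε * (M + -(M + N)))
        (1 / 24 * (N ^ 3 - N + (ε - ε⁻¹) * N ^ 2)),
      div_sub_div _ _ d1 d2, eq_div_iff (mul_ne_zero d1 d2)]
  field_simp [hε0]
  ring

lemma aux2 (ε M R : ℂ) (hε0 : ε ≠ 0)
    (d1 : (1 : ℂ) + ε * (R + -(M + R)) ≠ 0)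
    (d2 : (1 : ℂ) + 2 * ε * (M + -(M + R)) ≠ 0) :
    (M / 2 - R) * (1 / 24 * (4 * (M + R) ^ 2 - 1 + 2 * (ε - ε⁻¹) * (M + R)))
      = (1 + 2 * ε * -(M + R)) / (1 + ε * (R + -(M + R)))
          * (1 / 24 * (M ^ 3 - M + (ε - ε⁻¹) * M ^ 2))
        - -(M / 2 + -(M + R)) * (1 + 2 * ε * -(M + R)) / (1 + 2 * ε * (M + -(M + R)))
          * (1 / 24 * (4 * R ^ 2 - 1 + 2 * (ε - ε⁻¹) * R)) := by
  rw [div_mul_eq_mul_div (1 + 2 * ε * -(M + R)) (1 + ε * (R + -(M + R)))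
        (1 / 24 * (M ^ 3 - M + (ε - ε⁻¹) * M ^ 2)),
      div_mul_eq_mul_div (-(M / 2 + -(M + R)) * (1 + 2 * ε * -(M + R)))
        (1 + 2 * ε * (M + -(M + R)))
        (1 / 24 * (4 * R ^ 2 - 1 + 2 * (ε - ε⁻¹) * R)),
      div_sub_div _ _ d1 d2, eq_div_iff (mul_ne_zero d1 d2)]
  field_simp [hε0]
  ring

lemma aux3 (ε M R : ℂ) (hε0 : ε ≠ 0)
    (d1 : (1 : ℂ) + 2 * ε * (M + -(R + M)) ≠ 0)
    (d2 : (1 : ℂ) + 2 * ε * (M + R) ≠ 0) :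
    2 * (1 / 24 * ((R + -(R + M)) ^ 3 - (R + -(R + M)) + (ε - ε⁻¹) * (R + -(R + M)) ^ 2))
      = -M * (1 + ε * M) / (1 + 2 * ε * (M + -(R + M)))
          * (1 / 24 * (4 * R ^ 2 - 1 + 2 * (ε - ε⁻¹) * R))
        + -M * (1 + ε * M) / (1 + 2 * ε * (M + R))
          * (1 / 24 * (4 * (-(R + M)) ^ 2 - 1 + 2 * (ε - ε⁻¹) * -(R + M))) := by
  rw [div_mul_eq_mul_div (-M * (1 + ε * M)) (1 + 2 * ε * (M + -(R + M)))
        (1 / 24 * (4 * R ^ 2 - 1 + 2 * (ε - ε⁻¹) * R)),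
      div_mul_eq_mul_div (-M * (1 + ε * M)) (1 + 2 * ε * (M + R))
        (1 / 24 * (4 * (-(R + M)) ^ 2 - 1 + 2 * (ε - ε⁻¹) * -(R + M))),
      div_add_div _ _ d1 d2, eq_div_iff (mul_ne_zero d1 d2)]
  field_simp [hε0]
  ring

/-- existence part of Theorem 4.2: the explicit functions f, g, h, d,
φ, σ (and ψ = ρ = 0) satisfy equations (4.7)–(4.13) of the paper. -/
theorem central_extension_exists (θ ε : ℂ) (hθ : θ = 0 ∨ θ = 1 / 2)
    (hε : (0 < ε.re ∧ ∀ k : ℤ, ε⁻¹ ≠ (k : ℂ)) ∨ (ε.re = 0 ∧ 0 < ε.im))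
    (ψ ρ : ℂ → ℂ → ℂ) (hψ : ∀ x y : ℂ, ψ x y = 0) (hρ : ∀ x y : ℂ, ρ x y = 0) :
    ∀ (m n l : ℤ) (r s t : ℂ),
      InZT θ r → InZT θ s → InZT θ t →
      vphi ε m n - vphi ε n m
        = (1 / 12) * ((m : ℂ) ^ 3 - (m : ℂ)) * (if m + n = 0 then 1 else 0) ∧
      vsig ε r s + vsig ε s r
        = (1 / 12) * (4 * r ^ 2 - 1) * (if r + s = 0 then 1 else 0) ∧
      ψ m r = ρ r m ∧
      ((m : ℂ) - (n : ℂ)) * vphi ε ((m : ℂ) + (n : ℂ)) l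
        = vf ε n l * vphi ε m ((n : ℂ) + (l : ℂ))
          - vf ε m l * vphi ε n ((m : ℂ) + (l : ℂ)) ∧
      ((m : ℂ) - (n : ℂ)) * ψ ((m : ℂ) + (n : ℂ)) r
        = vg ε n r * ψ m ((n : ℂ) + r) - vg ε m r * ψ n ((m : ℂ) + r) ∧
      ((m : ℂ) / 2 - r) * ρ ((m : ℂ) + r) n
        = vh ε r n * ψ m ((n : ℂ) + r) - vf ε m n * ρ r ((m : ℂ) + (n : ℂ)) ∧
      ((m : ℂ) / 2 - r) * vsig ε ((m : ℂ) + r) s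
        = vd ε r s * vphi ε m (r + s) - vg ε m s * vsig ε r ((m : ℂ) + s) ∧
      2 * vphi ε (r + s) m
        = vh ε s m * vsig ε r ((m : ℂ) + s) + vh ε r m * vsig ε s ((m : ℂ) + r) ∧
      2 * ψ (r + s) t
        = vd ε s t * ρ r (s + t) + vd ε r t * ρ s (r + t) := by
  have hε0 : ε ≠ 0 := by
    rcases hε with ⟨h1, _⟩ | ⟨h1, h2⟩
    · intro h; rw [h] at h1; simp at h1
    · intro h; rw [h] at h2; simp at h2
  have hne : ∀ z : ℤ, (1 : ℂ) + ε * z ≠ 0 := by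
    intro z h
    rcases hε with ⟨h1, h2⟩ | ⟨h1, h2⟩
    · have hinv : ε⁻¹ = -(z : ℂ) :=
        inv_eq_of_mul_eq_one_right (by linear_combination -h)
      have := h2 (-z)
      push_cast at this
      exact this hinv
    · have hre := congrArg Complex.re h
      simp [Complex.add_re, Complex.mul_re, h1] at hre
  have key : ∀ c : ℂ, (∃ z : ℤ, c = (z : ℂ)) → (1 : ℂ) + ε * c ≠ 0 := by
    rintro c ⟨z, rfl⟩; exact hne z
  have key2 : ∀ c : ℂ, (∃ z : ℤ, 2 * c = (z : ℂ)) → (1 : ℂ) + 2 * ε * c ≠ 0 := by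
    rintro c ⟨z, hz⟩ h
    exact hne z (by linear_combination h - ε * hz)
  obtain ⟨w, hw⟩ : ∃ w : ℤ, θ + θ = (w : ℂ) := by
    rcases hθ with rfl | rfl
    · exact ⟨0, by norm_num⟩
    · exact ⟨1, by norm_num⟩
  intro m n l r s t hr hs ht
  obtain ⟨a, rfl⟩ := hr
  obtain ⟨b, rfl⟩ := hs
  obtain ⟨c, rfl⟩ := ht
  refine ⟨?_, ?_, ?_, ?_, ?_, ?_, ?_, ?_, ?_⟩
  · -- (4.7) for φ
    by_cases hc : m + n = 0
    · have hc1 : (m : ℂ) + n = 0 := by exact_mod_cast hc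
      have hc2 : (n : ℂ) + m = 0 := by linear_combination hc1
      have hnm : (n : ℂ) = -m := by linear_combination hc1
      rw [vphi_pos ε _ _ hc1, vphi_pos ε _ _ hc2, if_pos hc, hnm]; ring
    · have hc1 : ¬ ((m : ℂ) + n = 0) := by exact_mod_cast hc
      rw [vphi_zero ε _ _ hc1,
        vphi_zero ε _ _ (fun h => hc1 (by linear_combination h)), if_neg hc]
      ring
  · -- (4.7) for σ
    by_cases hc : ((a : ℂ) + θ) + ((b : ℂ) + θ) = 0
    · have hc2 : ((b : ℂ) + θ) + ((a : ℂ) + θ) = 0 := by linear_combination hc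
      have hsr : (b : ℂ) + θ = -((a : ℂ) + θ) := by linear_combination hc
      rw [vsig_pos ε _ _ hc, vsig_pos ε _ _ hc2, if_pos hc, hsr]; ring
    · rw [vsig_zero ε _ _ hc,
        vsig_zero ε _ _ (fun h => hc (by linear_combination h)), if_neg hc]
      ring
  · rw [hψ, hρ]
  · -- (4.8)
    by_cases hc : (m : ℂ) + n + l = 0
    · have hl : (l : ℂ) = -((m : ℂ) + n) := by linear_combination hc
      rw [hl]
      have c1 : ((m : ℂ) + n) + -((m : ℂ) + n) = 0 := by ring
      have c2 : (m : ℂ) + ((n : ℂ) + -((m : ℂ) + n)) = 0 := by ring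
      have c3 : (n : ℂ) + ((m : ℂ) + -((m : ℂ) + n)) = 0 := by ring
      rw [vphi_pos ε _ _ c1, vphi_pos ε _ _ c2, vphi_pos ε _ _ c3]
      simp only [vf]
      have d1 : (1 : ℂ) + ε * ((n : ℂ) + -((m : ℂ) + n)) ≠ 0 :=
        key _ ⟨-m, by push_cast; ring⟩
      have d2 : (1 : ℂ) + ε * ((m : ℂ) + -((m : ℂ) + n)) ≠ 0 :=
        key _ ⟨-n, by push_cast; ring⟩
      exact aux1 ε _ _ hε0 d1 d2
    · rw [vphi_zero ε _ _ (fun h => hc (by linear_combination h)),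
        vphi_zero ε _ _ (fun h => hc (by linear_combination h)),
        vphi_zero ε _ _ (fun h => hc (by linear_combination h))]
      ring
  · simp only [hψ]; ring
  · simp only [hψ, hρ]; ring
  · -- (4.11)
    by_cases hc : ((m : ℂ) + ((a : ℂ) + θ)) + ((b : ℂ) + θ) = 0
    · have hs2 : (b : ℂ) + θ = -((m : ℂ) + ((a : ℂ) + θ)) := by linear_combination hc
      rw [hs2]
      have c1 : ((m : ℂ) + ((a : ℂ) + θ)) + -((m : ℂ) + ((a : ℂ) + θ)) = 0 := by ring
      have c2 : (m : ℂ) + (((a : ℂ) + θ) + -((m : ℂ) + ((a : ℂ) + θ))) = 0 := by ring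
      have c3 : ((a : ℂ) + θ) + ((m : ℂ) + -((m : ℂ) + ((a : ℂ) + θ))) = 0 := by ring
      rw [vsig_pos ε _ _ c1, vphi_pos ε _ _ c2, vsig_pos ε _ _ c3]
      simp only [vd, vg]
      have d1 : (1 : ℂ) + ε * (((a : ℂ) + θ) + -((m : ℂ) + ((a : ℂ) + θ))) ≠ 0 :=
        key _ ⟨-m, by push_cast; ring⟩
      have d2 : (1 : ℂ) + 2 * ε * ((m : ℂ) + -((m : ℂ) + ((a : ℂ) + θ))) ≠ 0 :=
        key2 _ ⟨-2 * a - w, by push_cast; linear_combination -hw⟩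
      exact aux2 ε _ _ hε0 d1 d2
    · rw [vsig_zero ε _ _ (fun h => hc (by linear_combination h)),
        vphi_zero ε _ _ (fun h => hc (by linear_combination h)),
        vsig_zero ε _ _ (fun h => hc (by linear_combination h))]
      ring
  · -- (4.12)
    by_cases hc : (((a : ℂ) + θ) + ((b : ℂ) + θ)) + (m : ℂ) = 0
    · have hs2 : (b : ℂ) + θ = -(((a : ℂ) + θ) + (m : ℂ)) := by linear_combination hc
      rw [hs2]
      have c1 : (((a : ℂ) + θ) + -(((a : ℂ) + θ) + (m : ℂ))) + (m : ℂ) = 0 := by ring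
      have c2 : ((a : ℂ) + θ) + ((m : ℂ) + -(((a : ℂ) + θ) + (m : ℂ))) = 0 := by ring
      have c3 : -(((a : ℂ) + θ) + (m : ℂ)) + ((m : ℂ) + ((a : ℂ) + θ)) = 0 := by ring
      rw [vphi_pos ε _ _ c1, vsig_pos ε _ _ c2, vsig_pos ε _ _ c3]
      simp only [vh]
      have d1 : (1 : ℂ) + 2 * ε * ((m : ℂ) + -(((a : ℂ) + θ) + (m : ℂ))) ≠ 0 :=
        key2 _ ⟨-2 * a - w, by push_cast; linear_combination -hw⟩
      have d2 : (1 : ℂ) + 2 * ε * ((m : ℂ) + ((a : ℂ) + θ)) ≠ 0 :=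
        key2 _ ⟨2 * m + 2 * a + w, by push_cast; linear_combination hw⟩
      exact aux3 ε _ _ hε0 d1 d2
    · rw [vphi_zero ε _ _ (fun h => hc (by linear_combination h)),
        vsig_zero ε _ _ (fun h => hc (by linear_combination h)),
        vsig_zero ε _ _ (fun h => hc (by linear_combination h))]
      ring
  · simp only [hψ, hρ]; ring
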